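/- arXiv:2508.12238 — 4 statements merged into one kernel-verified Lean document; each statement's English description precedes it below -/
import Mathlib

section
/- No balancing number B_l with l ≥ 2 is a power of 2; that is, if l ≥ 2 and t ≥ 0 are integers, then B_l ≠ 2^t. -/
/-- Balancing numbers: `B 0 = 0`, `B 1 = 1`, `B (j+2) = 6 * B (j+1) - B j`. -/
def balancing : ℕ → ℤ
  | 0 => 0
  | 1 => 1
  | j + 2 => 6 * balancing (j + 1) - balancing j

lemma balancing_pair : ∀ j, 0 ≤ balancing j ∧ balancing j < balancing (j + 1) := by
  intro j
  induction j with
  | zero => simp [balancing]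
  | succ n ih =>
    have h : balancing (n + 2) = 6 * balancing (n + 1) - balancing n := rfl
    constructor <;> [linarith [ih.1, ih.2]; (rw [h]; linarith [ih.1, ih.2])]

lemma balancing_strictMono : StrictMono balancing :=
  strictMono_nat_of_lt_succ fun n => (balancing_pair n).2

lemma balancing_even_dvd : ∀ k, (3 : ℤ) ∣ balancing (2 * k) := by
  intro k
  induction k with
  | zero => simp [balancing]
  | succ n ih =>
    have h : balancing (2 * (n + 1)) = 6 * balancing (2 * n + 1) - balancing (2 * n) := by
      have : 2 * (n + 1) = (2 * n) + 2 := by ring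
      rw [this]; rfl
    rw [h]
    exact dvd_sub (Dvd.dvd.mul_right (by norm_num) _) ih

lemma balancing_odd : ∀ k, Odd (balancing (2 * k + 1)) := by
  intro k
  induction k with
  | zero => simp [balancing]
  | succ n ih =>
    have h : balancing (2 * (n + 1) + 1) = 6 * balancing (2 * n + 2) - balancing (2 * n + 1) := by
      have : 2 * (n + 1) + 1 = (2 * n + 1) + 2 := by ring
      rw [this]; rfl
    rw [h]
    obtain ⟨m, hm⟩ := ih
    exact ⟨3 * balancing (2 * n + 2) - m - 1, by rw [hm]; ring⟩

theorem stmt2 (l t : ℕ) (hl : 2 ≤ l) : balancing l ≠ 2 ^ t := by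
  intro heq
  rcases Nat.even_or_odd l with ⟨k, hk⟩ | ⟨k, hk⟩
  · -- even case: 3 ∣ balancing l = 2^t, impossible
    have h3 : (3 : ℤ) ∣ 2 ^ t := by
      rw [← heq, hk, ← two_mul]; exact balancing_even_dvd k
    have := Int.prime_three.dvd_of_dvd_pow h3
    norm_num at this
  · -- odd case: l ≥ 3, balancing l odd and ≥ 35
    have hodd : Odd (balancing l) := hk ▸ balancing_odd k
    have ht : t = 0 := by
      by_contra h
      have : (2 : ℤ) ∣ 2 ^ t := dvd_pow_self 2 h
      rw [← heq] at this
      exact (Int.not_odd_iff_even.mpr ((even_iff_two_dvd).mpr this)) hodd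
    rw [ht, pow_zero] at heq
    have h3l : 3 ≤ l := by omega
    have : balancing 3 ≤ balancing l := balancing_strictMono.le_iff_le.mpr h3l
    have h35 : balancing 3 = 35 := by norm_num [balancing]
    omega
end

section
/- Let k ≥ 3 be an integer and let l, m, n be positive integers with 1 ≤ m ≤ n and n ≥ k + 2. If B_l = F^{(k)}_n · F^{(k)}_m, then l < 0.8 n + 0.2. -/
lemma bal_aux (l : ℕ) : (0 ≤ balancing l ∧ 5 * balancing l ≤ balancing (l+1)) ∧
    (0 ≤ balancing (l+1) ∧ 5 * balancing (l+1) ≤ balancing (l+2)) := by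
  induction l with
  | zero => norm_num [balancing]
  | succ p ih =>
    obtain ⟨⟨h0, h1⟩, h2, h3⟩ := ih
    have e2 : balancing (p+2) = 6 * balancing (p+1) - balancing p := rfl
    have e3 : balancing (p+3) = 6 * balancing (p+2) - balancing (p+1) := rfl
    refine ⟨⟨h2, h3⟩, by linarith, ?_⟩
    have : balancing (p+1) ≤ balancing (p+2) := by linarith
    linarith

lemma bal_ratio (a : ℕ) : 29 * balancing (a+1) ≤ 5 * balancing (a+2) := by
  have e2 : balancing (a+2) = 6 * balancing (a+1) - balancing a := rfl
  obtain ⟨⟨h0, h1⟩, h2, h3⟩ := bal_aux a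
  linarith

lemma bal_pow (a : ℕ) : (29:ℤ)^a ≤ 5^a * balancing (a+1) := by
  induction a with
  | zero => norm_num [balancing]
  | succ p ih =>
    have h5 : (0:ℤ) ≤ 5^p := by positivity
    calc (29:ℤ)^(p+1) = 29 * 29^p := by ring
      _ ≤ 29 * (5^p * balancing (p+1)) := by
          have : (0:ℤ) ≤ 29 := by norm_num
          exact mul_le_mul_of_nonneg_left ih this
      _ = 5^p * (29 * balancing (p+1)) := by ring
      _ ≤ 5^p * (5 * balancing (p+2)) := mul_le_mul_of_nonneg_left (bal_ratio p) h5
      _ = 5^(p+1) * balancing (p+2) := by ring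

lemma key_num (a b : ℕ) (hab : 4*b + 4 ≤ 5*a) : 5^a * 4^b < 29^a := by
  have hpow : (5^a * 4^b)^5 < (29^a)^5 := by
    have hc : a * 5 = (4*(b+1)) + (5*a - (4*b+4)) := by omega
    set c := 5*a - (4*b+4) with hcdef
    have e4 : (4:ℕ)^(b*5) = 1024^b := by
      rw [show b*5 = 5*b by ring, pow_mul]; norm_num
    have e5 : (5:ℕ)^(a*5) = 625^(b+1) * 5^c := by
      rw [hc, pow_add, pow_mul]; norm_num
    have e29 : (29:ℕ)^(a*5) = 707281^(b+1) * 29^c := by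
      rw [hc, pow_add, pow_mul]; norm_num
    have e1 : (5^a * 4^b)^5 = 625^(b+1) * 1024^b * 5^c := by
      rw [mul_pow, ← pow_mul, ← pow_mul, e4, e5]; ring
    have e2 : (29^a)^5 = 707281^(b+1) * 29^c := by
      rw [← pow_mul, e29]
    rw [e1, e2]
    have h1 : (625:ℕ)^(b+1) * 1024^b < 707281^(b+1) := by
      have e640 : (640000:ℕ)^b = 625^b * 1024^b := by
        rw [← mul_pow]; norm_num
      have eL : (625:ℕ)^(b+1) * 1024^b = 625 * 640000^b := by
        rw [pow_succ, e640]; ring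
      have eR : (707281:ℕ)^(b+1) = 707281 * 707281^b := by
        rw [pow_succ]; ring
      rw [eL, eR]
      exact Nat.mul_lt_mul_of_lt_of_le (by norm_num)
        (Nat.pow_le_pow_left (by norm_num) b) (by positivity)
    have h2 : (5:ℕ)^c ≤ 29^c := Nat.pow_le_pow_left (by norm_num) c
    calc 625^(b+1) * 1024^b * 5^c ≤ 625^(b+1) * 1024^b * 29^c :=
          Nat.mul_le_mul_left _ h2
      _ < 707281^(b+1) * 29^c :=
          Nat.mul_lt_mul_of_lt_of_le h1 (le_refl _) (by positivity)
  exact lt_of_pow_lt_pow_left₀ 5 (by positivity) hpow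

theorem stmt6 (k : ℕ) (hk : 3 ≤ k)
    (F : ℤ → ℤ)
    (hF0 : ∀ j : ℤ, -((k : ℤ) - 2) ≤ j → j ≤ 0 → F j = 0)
    (hF1 : F 1 = 1)
    (hFrec : ∀ j : ℤ, 2 ≤ j → F j = ∑ i ∈ Finset.range k, F (j - 1 - (i : ℤ)))
    (l m n : ℕ) (hl : 1 ≤ l) (hm : 1 ≤ m) (hmn : m ≤ n) (hn : k + 2 ≤ n)
    (h : balancing l = F n * F m) :
    (l : ℝ) < 0.8 * n + 0.2 := by
  -- nonnegativity of F
  have hFnn' : ∀ t : ℕ, ∀ j : ℤ, -((k:ℤ)-2) ≤ j → j ≤ (t:ℤ) → 0 ≤ F j := by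
    intro t
    induction t using Nat.strong_induction_on with
    | _ t ih =>
      intro j hj1 hj2
      rcases le_or_gt j 0 with h0 | h0
      · rw [hF0 j hj1 h0]
      rcases eq_or_lt_of_le (show (1:ℤ) ≤ j from h0) with h1 | h1
      · rw [← h1]; norm_num [hF1]
      · have h2 : (2:ℤ) ≤ j := h1
        rw [hFrec j h2]
        apply Finset.sum_nonneg
        intro i hi
        have hik : i < k := Finset.mem_range.mp hi
        have ht : 1 ≤ t := by omega
        exact ih (t-1) (by omega) (j - 1 - i) (by omega) (by omega)
  have hFnn : ∀ j : ℤ, -((k:ℤ)-2) ≤ j → 0 ≤ F j := by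
    intro j hj
    rcases le_or_gt j 0 with h0 | h0
    · rw [hF0 j hj h0]
    · exact hFnn' j.toNat j hj (by omega)
  -- F 2 = 1
  have hF2 : F 2 = 1 := by
    rw [hFrec 2 (by norm_num)]
    rw [Finset.sum_eq_single 0]
    · norm_num [hF1]
    · intro i hi hne
      have hik : i < k := Finset.mem_range.mp hi
      have hi1 : 1 ≤ i := by omega
      apply hF0 <;> push_cast <;> omega
    · intro hmem
      exact absurd (Finset.mem_range.mpr (by omega)) hmem
  -- shift identity : F (j+1) = 2 F j - F (j - k)
  have hFs : ∀ j : ℤ, 2 ≤ j → F (j+1) = 2 * F j - F (j - k) := by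
    intro j hj
    obtain ⟨k', rfl⟩ : ∃ k', k = k' + 1 := ⟨k-1, by omega⟩
    have e1 := hFrec (j+1) (by omega)
    have e2 := hFrec j hj
    rw [Finset.sum_range_succ'] at e1
    rw [Finset.sum_range_succ] at e2
    have hsum : ∑ i ∈ Finset.range k', F (j + 1 - 1 - ((i:ℕ)+1 : ℕ)) =
        ∑ i ∈ Finset.range k', F (j - 1 - (i:ℕ)) := by
      apply Finset.sum_congr rfl
      intro i _
      congr 1
      push_cast
      ring
    rw [hsum] at e1
    have ea : F (j + 1 - 1 - ((0:ℕ):ℤ)) = F j := by norm_num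
    rw [ea] at e1
    have eb : F (j - 1 - ((k':ℕ):ℤ)) = F (j - ((k'+1 : ℕ):ℤ)) := by
      congr 1
      push_cast
      ring
    rw [eb] at e2
    linarith
  -- bound F j ≤ 2^(j-2) for j ≥ 2
  have hFb : ∀ j : ℕ, 2 ≤ j → F j ≤ 2^(j-2) := by
    intro j hj
    induction j, hj using Nat.le_induction with
    | base => rw [show ((2:ℕ):ℤ) = 2 by norm_num, hF2]; norm_num
    | succ j hj ih =>
      have hnn : 0 ≤ F ((j:ℤ) - k) := hFnn _ (by omega)
      have hs := hFs j (by exact_mod_cast hj)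
      have e : F ((j+1 : ℕ):ℤ) = F ((j:ℤ)+1) := by push_cast; ring_nf
      rw [e, hs]
      have : F (j:ℤ) ≤ 2^(j-2) := ih
      have epow : (2:ℤ)^(j+1-2) = 2 * 2^(j-2) := by
        rw [show j+1-2 = (j-2)+1 by omega, pow_succ]
        ring
      rw [epow]
      linarith
  -- main bounds
  have hFm : F m ≤ 2^(m-2) := by
    rcases eq_or_lt_of_le hm with h1 | h1
    · rw [show ((m:ℕ):ℤ) = 1 by omega, hF1, show m - 2 = 0 by omega]
      norm_num
    · exact hFb m h1
  have hFn2 : F n ≤ 2^(n-2) := hFb n (by omega)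
  have hFmnn : 0 ≤ F m := hFnn m (by omega)
  have hprod : balancing l ≤ 4^(n-2) := by
    rw [h]
    calc F n * F m ≤ 2^(n-2) * 2^(m-2) :=
          mul_le_mul hFn2 hFm hFmnn (by positivity)
      _ = 2^((n-2)+(m-2)) := (pow_add 2 _ _).symm
      _ ≤ 2^((n-2)+(n-2)) := pow_le_pow_right₀ (by norm_num) (by omega)
      _ = 4^(n-2) := by rw [← two_mul, pow_mul]; norm_num
  have hbal : (29:ℤ)^(l-1) ≤ 5^(l-1) * balancing l := by
    have := bal_pow (l-1)
    rwa [Nat.sub_add_cancel hl] at this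
  have hfin : (29:ℤ)^(l-1) ≤ 5^(l-1) * 4^(n-2) :=
    le_trans hbal (mul_le_mul_of_nonneg_left hprod (by positivity))
  have hfinN : 29^(l-1) ≤ 5^(l-1) * 4^(n-2) := by exact_mod_cast hfin
  have h54 : 5*l ≤ 4*n := by
    by_contra hcon
    have hab : 4*(n-2) + 4 ≤ 5*(l-1) := by omega
    exact absurd hfinN (not_le.mpr (key_num _ _ hab))
  have hR : (5:ℝ) * l ≤ 4 * n := by exact_mod_cast h54
  have hl1 : (1:ℝ) ≤ (l:ℝ) := by exact_mod_cast hl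
  norm_num
  linarith
end

section
/- Let k ≥ 2 be an integer and let φ be a real number with 1 < φ < 2 satisfying φ^k = φ^{k−1} + φ^{k−2} + ⋯ + φ + 1. Then there are no positive integers a and b such that φ^a = (3 + 2√2)^b. In particular, the ratio log(3 + 2√2)/log φ is irrational. -/
set_option maxHeartbeats 1000000

open Polynomial

/-- Powers of `3 + 2√2` have the form `x + y√2` with `x² = 2y² + 1`. -/
lemma pell_pow (b : ℕ) : ∃ x y : ℕ, 0 < x ∧ b ≤ y ∧ (x : ℝ) ^ 2 = 2 * (y : ℝ) ^ 2 + 1 ∧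
    (3 + 2 * Real.sqrt 2) ^ b = (x : ℝ) + (y : ℝ) * Real.sqrt 2 := by
  have s2sq : Real.sqrt 2 ^ 2 = 2 := Real.sq_sqrt (by norm_num)
  induction b with
  | zero => exact ⟨1, 0, by norm_num⟩
  | succ n ih =>
    obtain ⟨x, y, hx, hy, hnorm, heq⟩ := ih
    refine ⟨3 * x + 4 * y, 2 * x + 3 * y, by omega, by omega, ?_, ?_⟩
    · push_cast; nlinarith [hnorm]
    · rw [pow_succ, heq]; push_cast; nlinarith [s2sq]

lemma no_rat_sq_ten (r : ℚ) : r ^ 2 ≠ 10 := by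
  intro h
  have h1 : ((r : ℝ)) ^ 2 = ((10 : ℤ) : ℝ) := by rw [← Rat.cast_pow, h]; norm_num
  have h2 : ¬ ∃ y : ℤ, (r : ℝ) = y := by
    rintro ⟨y, hy⟩
    rw [hy] at h1
    have hz : y ^ 2 = 10 := by exact_mod_cast h1
    have hy3 : y ≤ 3 := by nlinarith [sq_nonneg (y - 3)]
    have hy3' : -3 ≤ y := by nlinarith [sq_nonneg (y + 3)]
    interval_cases y <;> norm_num at hz
  have := irrational_nrt_of_notint_nrt 2 10 h1 h2 (by norm_num)
  exact (Rat.not_irrational r) this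

theorem stmt16 (k : ℕ) (hk : 2 ≤ k) (φ : ℝ) (hφ1 : 1 < φ) (hφ2 : φ < 2)
    (hroot : φ ^ k = ∑ i ∈ Finset.range k, φ ^ i) :
    (¬ ∃ a b : ℕ, 0 < a ∧ 0 < b ∧ φ ^ a = (3 + 2 * Real.sqrt 2) ^ b) ∧
      Irrational (Real.log (3 + 2 * Real.sqrt 2) / Real.log φ) := by
  have s2sq : Real.sqrt 2 ^ 2 = 2 := Real.sq_sqrt (by norm_num)
  have s2pos : 0 < Real.sqrt 2 := Real.sqrt_pos.2 (by norm_num)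
  have hφpos : 0 < φ := by linarith
  have key1 : φ ^ k * (2 - φ) = 1 := by
    have gs := geom_sum_mul φ k
    rw [← hroot] at gs
    linear_combination -gs
  have hφk : 0 < φ ^ k := pow_pos hφpos k
  have h2φ : 0 < 2 - φ := by nlinarith [hφk]
  -- main claim
  have key : ∀ a b : ℕ, 0 < a → 0 < b → φ ^ a ≠ (3 + 2 * Real.sqrt 2) ^ b := by
    intro a b ha hb heqt
    obtain ⟨x, y, hx, hy, hnorm, hub⟩ := pell_pow b
    rw [hub] at heqt
    have hy1 : 1 ≤ y := le_trans hb hy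
    have hyQ : ((y : ℚ)) ≠ 0 := Nat.cast_ne_zero.mpr (by omega)
    rcases eq_or_lt_of_le hk with hk2 | hk3
    · -- k = 2 : φ is the golden ratio
      have hgold : φ ^ 2 = φ + 1 := by
        rw [← hk2] at hroot
        simp [Finset.sum_range_succ] at hroot
        linarith [hroot]
      -- φ^n = c φ + d with c, d naturals, c > 0
      have grep : ∀ n : ℕ, 0 < n → ∃ c d : ℕ, 0 < c ∧ φ ^ n = (c : ℝ) * φ + d := by
        intro n hn
        induction n with
        | zero => omega
        | succ m ihm =>
          rcases Nat.eq_zero_or_pos m with hm | hm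
          · exact ⟨1, 0, by norm_num, by simp [hm]⟩
          · obtain ⟨c, d, hc, hcd⟩ := ihm hm
            refine ⟨c + d, c, by omega, ?_⟩
            rw [pow_succ, hcd]
            push_cast
            nlinarith [hgold]
      obtain ⟨c, d, hc, hcd⟩ := grep a ha
      have hcR : (0 : ℝ) < c := by exact_mod_cast hc
      -- φ = p + q √2 with rational p q, q ≠ 0
      set p : ℚ := ((x : ℚ) - d) / c with hp
      set q : ℚ := (y : ℚ) / c with hq
      have hcQ : ((c : ℚ)) ≠ 0 := Nat.cast_ne_zero.mpr (by omega)
      have hqne : q ≠ 0 := by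
        rw [hq]
        exact div_ne_zero hyQ hcQ
      have hφpq : φ = (p : ℝ) + (q : ℝ) * Real.sqrt 2 := by
        have h1 : (c : ℝ) * φ + d = (x : ℝ) + y * Real.sqrt 2 := by rw [← hcd, ← heqt]
        rw [hp, hq]
        push_cast
        field_simp
        linarith [h1]
      have hkey : Real.sqrt 2 * ((2 * p * q - q : ℚ) : ℝ) = ((p + 1 - p ^ 2 - 2 * q ^ 2 : ℚ) : ℝ) := by
        rw [hφpq] at hgold
        push_cast
        linear_combination hgold - ((q : ℝ)) ^ 2 * s2sq
      have hcoef : (2 * p * q - q : ℚ) = 0 := by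
        by_contra hne
        have hneR : ((2 * p * q - q : ℚ) : ℝ) ≠ 0 := by exact_mod_cast hne
        have h2 : Real.sqrt 2 = ((p + 1 - p ^ 2 - 2 * q ^ 2 : ℚ) : ℝ) / ((2 * p * q - q : ℚ) : ℝ) :=
          (eq_div_iff hneR).mpr hkey
        refine irrational_sqrt_two ⟨(p + 1 - p ^ 2 - 2 * q ^ 2) / (2 * p * q - q), ?_⟩
        rw [Rat.cast_div]
        exact h2.symm
      have hp12 : p = 1 / 2 := by
        have h0 : q * (2 * p - 1) = 0 := by linear_combination hcoef
        rcases mul_eq_zero.mp h0 with h | h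
        · exact absurd h hqne
        · linarith
      have hsecond : (p + 1 - p ^ 2 - 2 * q ^ 2 : ℚ) = 0 := by
        have h0 : ((p + 1 - p ^ 2 - 2 * q ^ 2 : ℚ) : ℝ) = 0 := by
          rw [← hkey, hcoef]; push_cast; ring
        exact_mod_cast h0
      apply no_rat_sq_ten (4 * q)
      rw [hp12] at hsecond
      nlinarith [hsecond]
    · -- k ≥ 3
      obtain ⟨j, rfl⟩ : ∃ j, k = j + 2 := ⟨k - 2, by omega⟩
      have hj1 : 1 ≤ j := by omega
      have hgt : φ ^ 2 > φ + 1 := by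
        have hsum : φ ^ (j + 2) = (∑ i ∈ Finset.range j, φ ^ i) + φ ^ j + φ ^ (j + 1) := by
          rw [hroot, Finset.sum_range_succ, Finset.sum_range_succ]
        have hS : (1 : ℝ) ≤ ∑ i ∈ Finset.range j, φ ^ i := by
          calc (1 : ℝ) = φ ^ 0 := by norm_num
          _ ≤ ∑ i ∈ Finset.range j, φ ^ i := by
              apply Finset.single_le_sum (f := fun i => φ ^ i)
              · intro i _; positivity
              · simpa using (show 0 < j by omega)
        have hpj : 0 < φ ^ j := pow_pos hφpos j
        have hfac : φ ^ j * (φ ^ 2 - φ - 1) = ∑ i ∈ Finset.range j, φ ^ i := by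
          linear_combination hsum
        have h1le : (1 : ℝ) ≤ φ ^ j * (φ ^ 2 - φ - 1) := by rw [hfac]; exact hS
        by_contra hcon
        push_neg at hcon
        have hnp : φ ^ j * (φ ^ 2 - φ - 1) ≤ 0 :=
          mul_nonpos_of_nonneg_of_nonpos hpj.le (by linarith)
        linarith [h1le, hnp]
      set K := j + 2 with hK
      have hKk : φ ^ K * (2 - φ) = 1 := key1
      -- polynomials annihilating φ
      set F : ℚ[X] := ((X : ℚ[X]) ^ a - C (x : ℚ)) ^ 2 - C (2 * (y : ℚ) ^ 2) with hF
      set G : ℚ[X] := (C 2 - (X : ℚ[X])) ^ a * (X : ℚ[X]) ^ (a * K) - 1 with hG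
      have hFa : Polynomial.aeval φ F = 0 := by
        simp only [hF, map_sub, map_pow, aeval_X, aeval_C, eq_ratCast]
        push_cast
        rw [heqt]
        linear_combination ((y : ℝ)) ^ 2 * s2sq
      have hprod : (2 - φ) * φ ^ K = 1 := by linear_combination key1
      have hGa : Polynomial.aeval φ G = 0 := by
        simp only [hG, map_sub, map_mul, map_pow, aeval_X, aeval_C, map_one, eq_ratCast]
        push_cast
        rw [sub_eq_zero, pow_mul', ← mul_pow, hprod, one_pow]
      have hakne : a * K ≠ 0 := by positivity
      have hG0 : G ≠ 0 := by
        intro h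
        have h0 := congrArg (Polynomial.eval (0 : ℚ)) h
        simp [hG, zero_pow hakne] at h0
      have halg : IsIntegral ℚ φ := (isAlgebraic_iff_isIntegral).mp ⟨G, hG0, hGa⟩
      set m := minpoly ℚ φ with hm
      have hmF : m ∣ F := minpoly.dvd ℚ φ hFa
      have hmG : m ∣ G := minpoly.dvd ℚ φ hGa
      set M := m.map (algebraMap ℚ ℂ) with hM
      -- every complex root of m equals φ
      have hroots : ∀ z ∈ M.roots, z = (φ : ℂ) := by
        intro z hz
        have hzm : Polynomial.aeval z m = 0 := by
          have h0 := Polynomial.isRoot_of_mem_roots hz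
          rwa [Polynomial.IsRoot, hM, Polynomial.eval_map, ← Polynomial.aeval_def] at h0
        have hzF : Polynomial.aeval z F = 0 := by
          obtain ⟨cc, hcc⟩ := hmF; rw [hcc, map_mul, hzm, zero_mul]
        have hzG : Polynomial.aeval z G = 0 := by
          obtain ⟨cc, hcc⟩ := hmG; rw [hcc, map_mul, hzm, zero_mul]
        simp only [hF, map_sub, map_pow, aeval_X, aeval_C, eq_ratCast, sub_eq_zero] at hzF
        simp only [hG, map_sub, map_mul, map_pow, aeval_X, aeval_C, map_one, eq_ratCast,
          sub_eq_zero] at hzG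
        push_cast at hzF hzG
        set s2c : ℂ := ((Real.sqrt 2 : ℝ) : ℂ) with hs2c
        have hs2csq : s2c ^ 2 = 2 := by
          rw [hs2c, ← Complex.ofReal_pow, s2sq]; norm_num
        have hfac : (z ^ a - (x : ℂ) - (y : ℂ) * s2c) * (z ^ a - (x : ℂ) + (y : ℂ) * s2c) = 0 := by
          linear_combination hzF - ((y : ℂ)) ^ 2 * hs2csq
        have hta : φ ^ a = (x : ℝ) + y * Real.sqrt 2 := heqt
        have htpos : 0 < (x : ℝ) + y * Real.sqrt 2 := by positivity
        have htinv : ((x : ℝ) - y * Real.sqrt 2) = (φ ^ a)⁻¹ := by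
          apply eq_inv_of_mul_eq_one_left
          rw [hta]
          push_cast
          linear_combination hnorm - ((y : ℝ)) ^ 2 * s2sq
        have htinvpos : 0 < (x : ℝ) - y * Real.sqrt 2 := by
          rw [htinv]; positivity
        have habs : ‖z‖ = φ ∨ ‖z‖ = φ⁻¹ := by
          rcases mul_eq_zero.mp hfac with h | h
          · left
            have hz' : z ^ a = (((x : ℝ) + y * Real.sqrt 2 : ℝ) : ℂ) := by
              push_cast [hs2c] at h ⊢; linear_combination h
            have h0 : ‖z‖ ^ a = φ ^ a := by
              rw [← norm_pow, hz', Complex.norm_real, Real.norm_eq_abs, abs_of_pos htpos, hta]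
            exact (pow_left_inj₀ (by positivity) hφpos.le ha.ne').mp h0
          · right
            have hz' : z ^ a = (((x : ℝ) - y * Real.sqrt 2 : ℝ) : ℂ) := by
              push_cast [hs2c] at h ⊢; linear_combination h
            have h0 : ‖z‖ ^ a = (φ⁻¹) ^ a := by
              rw [← norm_pow, hz', Complex.norm_real, Real.norm_eq_abs, abs_of_pos htinvpos, htinv, inv_pow]
            exact (pow_left_inj₀ (by positivity) (by positivity) ha.ne').mp h0
        have hzGabs : ‖(2 - z)‖ ^ a * ‖z‖ ^ (a * K) = 1 := by
          simpa only [norm_mul, norm_pow, norm_one] using congrArg norm hzG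
        rcases habs with hzφ | hzφ
        · -- |z| = φ forces z = φ
          have habs2 : ‖(2 - z)‖ = 2 - φ := by
            have h1 : ‖(2 - z)‖ ^ a * φ ^ (a * K) = 1 := by rw [← hzφ]; exact hzGabs
            have h2 : (2 - φ) ^ a * φ ^ (a * K) = 1 := by
              rw [pow_mul', ← mul_pow, hprod, one_pow]
            have h3 : ‖(2 - z)‖ ^ a = (2 - φ) ^ a :=
              mul_right_cancel₀ (pow_ne_zero _ hφpos.ne') (h1.trans h2.symm)
            exact (pow_left_inj₀ (by positivity) h2φ.le ha.ne').mp h3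
          have hns : Complex.normSq z = φ ^ 2 := by
            rw [← Complex.sq_norm, hzφ]
          have hns2 : Complex.normSq (2 - z) = (2 - φ) ^ 2 := by
            rw [← Complex.sq_norm, habs2]
          rw [Complex.normSq_apply] at hns hns2
          simp only [Complex.sub_re, Complex.sub_im] at hns2
          norm_num at hns2
          have hrez : z.re = φ := by nlinarith [hns, hns2]
          have himz : z.im = 0 := by nlinarith [hns, hrez]
          apply Complex.ext
          · simpa using hrez
          · simpa using himz
        · -- |z| = φ⁻¹ is impossible since k ≥ 3
          exfalso
          have habs2 : ‖(2 - z)‖ = φ ^ K := by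
            have h1 : ‖(2 - z)‖ ^ a * (φ⁻¹) ^ (a * K) = 1 := by rw [← hzφ]; exact hzGabs
            have h2 : (φ ^ K) ^ a * (φ⁻¹) ^ (a * K) = 1 := by
              rw [← pow_mul, inv_pow, mul_comm K a, mul_inv_cancel₀ (pow_ne_zero _ hφpos.ne')]
            have h3 : ‖(2 - z)‖ ^ a = (φ ^ K) ^ a :=
              mul_right_cancel₀ (pow_ne_zero _ (inv_ne_zero hφpos.ne')) (h1.trans h2.symm)
            exact (pow_left_inj₀ (by positivity) (by positivity) ha.ne').mp h3
          have htri : ‖(2 - z)‖ ≤ 2 + ‖z‖ := by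
            calc ‖(2 - z)‖ ≤ ‖(2 : ℂ)‖ + ‖-z‖ := by
                  rw [sub_eq_add_neg]; exact norm_add_le 2 (-z)
            _ = 2 + ‖z‖ := by rw [norm_neg]; simp [Complex.norm_two]
          rw [habs2, hzφ] at htri
          have hφinv : φ * φ⁻¹ = 1 := mul_inv_cancel₀ hφpos.ne'
          have htri2 : φ ^ K * φ ≤ 2 * φ + 1 := by nlinarith [htri, hφpos, hφinv]
          have hKle : φ ^ K ≤ φ + 1 := by nlinarith [htri2, hKk]
          have hK3 : φ ^ K = φ ^ j * φ ^ 2 := by rw [hK]; ring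
          have h1le : (1 : ℝ) ≤ φ ^ j := one_le_pow₀ hφ1.le
          nlinarith [hKle, hK3, h1le, hgt, pow_pos hφpos 2]
      -- minpoly has degree 1, so φ is rational: contradiction
      have hsep : m.Separable := (minpoly.irreducible halg).separable
      have hMsep : M.Separable := hsep.map
      have hnodup : M.roots.Nodup := Polynomial.nodup_roots hMsep
      have hdeg : m.natDegree = Multiset.card M.roots :=
        by rw [← (IsAlgClosed.splits M).natDegree_eq_card_roots, hM, Polynomial.natDegree_map]
      have hcard : Multiset.card M.roots ≤ 1 := by
        rw [← Multiset.toFinset_card_of_nodup hnodup]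
        have hsub : M.roots.toFinset ⊆ {(φ : ℂ)} := by
          intro z hzz
          rw [Multiset.mem_toFinset] at hzz
          simp [hroots z hzz]
        calc M.roots.toFinset.card ≤ ({(φ : ℂ)} : Finset ℂ).card := Finset.card_le_card hsub
        _ = 1 := Finset.card_singleton _
      have hdeg1 : m.natDegree = 1 := by
        have hp0 := minpoly.natDegree_pos halg
        rw [hdeg] at hp0 ⊢
        exact le_antisymm hcard hp0
      have hrat : ∃ r : ℚ, φ = (r : ℝ) := by
        have hmonic := minpoly.monic halg
        have hc1 : m.coeff 1 = 1 := by
          have h0 := hmonic.leadingCoeff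
          rwa [Polynomial.leadingCoeff, hdeg1] at h0
        have heqm := Polynomial.eq_X_add_C_of_natDegree_le_one (le_of_eq hdeg1)
        have haev : Polynomial.aeval φ m = 0 := minpoly.aeval ℚ φ
        rw [heqm, hc1] at haev
        simp only [map_add, map_mul, aeval_X, aeval_C, map_one, one_mul, eq_ratCast] at haev
        exact ⟨-(m.coeff 0), by push_cast; linarith [haev]⟩
      obtain ⟨r, hr⟩ := hrat
      apply irrational_sqrt_two
      refine ⟨(r ^ a - x) / y, ?_⟩
      have hyR : ((y : ℝ)) ≠ 0 := Nat.cast_ne_zero.mpr (by omega)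
      push_cast
      rw [div_eq_iff hyR, ← hr]
      linarith [heqt]
  constructor
  · rintro ⟨a, b, ha, hb, h⟩
    exact key a b ha hb h
  · rintro ⟨r, hr⟩
    have hupos : (1 : ℝ) < 3 + 2 * Real.sqrt 2 := by nlinarith [s2pos]
    have hlogu : 0 < Real.log (3 + 2 * Real.sqrt 2) := Real.log_pos hupos
    have hlogφ : 0 < Real.log φ := Real.log_pos hφ1
    have hrpos : (0 : ℝ) < (r : ℝ) := by rw [hr]; positivity
    have hrq : (0 : ℚ) < r := by exact_mod_cast hrpos
    set a : ℕ := r.num.toNat with haa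
    set b : ℕ := r.den with hbb
    have hna : (a : ℤ) = r.num := Int.toNat_of_nonneg (Rat.num_pos.mpr hrq).le
    have hapos : 0 < a := by
      have h0 := Rat.num_pos.mpr hrq
      omega
    have hbpos : 0 < b := r.pos
    have hd0 : ((r.den : ℝ)) ≠ 0 := Nat.cast_ne_zero.mpr r.pos.ne'
    have hl0 : Real.log φ ≠ 0 := ne_of_gt hlogφ
    have hcross : (r.num : ℝ) * Real.log φ = Real.log (3 + 2 * Real.sqrt 2) * (r.den : ℝ) := by
      have h := hr
      rw [Rat.cast_def] at h
      field_simp at h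
      linarith [h]
    have hfin : φ ^ a = (3 + 2 * Real.sqrt 2) ^ b := by
      have haR : ((a : ℝ)) = (r.num : ℝ) := by exact_mod_cast congrArg (fun n : ℤ => (n : ℝ)) hna
      have h1 : Real.log (φ ^ a) = Real.log ((3 + 2 * Real.sqrt 2) ^ b) := by
        rw [Real.log_pow, Real.log_pow]
        rw [hbb]
        push_cast
        rw [haR]
        linarith [hcross]
      have h2 : (0 : ℝ) < φ ^ a := pow_pos hφpos a
      have h3 : (0 : ℝ) < (3 + 2 * Real.sqrt 2) ^ b := by positivity
      calc φ ^ a = Real.exp (Real.log (φ ^ a)) := (Real.exp_log h2).symm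
      _ = Real.exp (Real.log ((3 + 2 * Real.sqrt 2) ^ b)) := by rw [h1]
      _ = (3 + 2 * Real.sqrt 2) ^ b := Real.exp_log h3
    exact key a b hapos hbpos hfin
end

section
/- Let k ≥ 3 be an integer, let φ be a real number with 1 < φ < 2 satisfying φ^k = φ^{k−1} + φ^{k−2} + ⋯ + φ + 1, and set f_k(φ) = (φ − 1)/(2 + (k+1)(φ − 2)). Let l, m, n be positive integers with 1 ≤ m ≤ n and n ≥ k + 2 such that B_l = F^{(k)}_n · F^{(k)}_m. If moreover |F^{(k)}_n − f_k(φ) φ^{n−1}| < 1/2 and |F^{(k)}_m − f_k(φ) φ^{m−1}| < 1/2, then |(3 + 2√2)^l · φ^{−(n+m−2)} · f_k(φ)^{−2} / (4√2) − 1| < 6 / φ^{m−1}. -/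
set_option maxHeartbeats 1600000 in
theorem stmt18 (k : ℕ) (hk : 3 ≤ k)
    (F : ℤ → ℤ)
    (hF0 : ∀ j : ℤ, -((k : ℤ) - 2) ≤ j → j ≤ 0 → F j = 0)
    (hF1 : F 1 = 1)
    (hFrec : ∀ j : ℤ, 2 ≤ j → F j = ∑ i ∈ Finset.range k, F (j - 1 - (i : ℤ)))
    (φ : ℝ) (hφ1 : 1 < φ) (hφ2 : φ < 2)
    (hroot : φ ^ k = ∑ i ∈ Finset.range k, φ ^ i)
    (f : ℝ) (hf : f = (φ - 1) / (2 + (k + 1) * (φ - 2)))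
    (l m n : ℕ) (hl : 1 ≤ l) (hm : 1 ≤ m) (hmn : m ≤ n) (hn : k + 2 ≤ n)
    (h : balancing l = F n * F m)
    (happroxn : |(F n : ℝ) - f * φ ^ (n - 1)| < 1 / 2)
    (happroxm : |(F m : ℝ) - f * φ ^ (m - 1)| < 1 / 2) :
    |(3 + 2 * Real.sqrt 2) ^ l * φ ^ (-((n : ℤ) + (m : ℤ) - 2)) * (f ^ 2)⁻¹ /
        (4 * Real.sqrt 2) - 1| < 6 / φ ^ (m - 1) := by
  have hs2 : (Real.sqrt 2)^2 = 2 := Real.sq_sqrt (by norm_num)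
  have hs0 : (0:ℝ) < Real.sqrt 2 := Real.sqrt_pos.mpr (by norm_num)
  set s : ℝ := Real.sqrt 2 with hsdef
  have hs14 : 1.4 < s := by nlinarith
  have hs15 : s < 1.5 := by nlinarith
  -- balancing Binet
  have hbal : ∀ j : ℕ, (balancing j : ℝ) * (4*s) = (3+2*s)^j - (3-2*s)^j := by
    intro j
    induction j using Nat.twoStepInduction with
    | zero => simp [balancing]
    | one => simp [balancing]; ring
    | more j ih1 ih2 =>
      have hγ : (3+2*s)^2 - 6*(3+2*s) + 1 = 0 := by nlinarith [hs2]
      have hδ : (3-2*s)^2 - 6*(3-2*s) + 1 = 0 := by nlinarith [hs2]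
      simp only [balancing]
      push_cast
      linear_combination 6*ih2 - ih1 + (3+2*s)^j * hγ - (3-2*s)^j * hδ
        + 8*((3-2*s)^j - (3+2*s)^j)*hs2
  -- φ facts
  have hφ0 : (0:ℝ) < φ := by linarith
  have hφgeom : φ^k * (2 - φ) = 1 := by
    rw [geom_sum_eq (by intro hc; rw [hc] at hφ1; linarith) k] at hroot
    have hne : φ - 1 ≠ 0 := by intro hc; nlinarith
    field_simp at hroot
    linear_combination -hroot
  have hφ53 : 5/3 < φ := by
    by_contra hcon
    push_neg at hcon
    have h3k : φ^3 ≤ φ^k := pow_le_pow_right₀ (le_of_lt hφ1) hk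
    nlinarith [hφgeom, mul_le_mul_of_nonneg_right h3k (by linarith : (0:ℝ) ≤ 2 - φ),
      mul_pos (sub_pos.2 hφ1) (sub_pos.2 hφ1), sq_nonneg (φ - 1), sq_nonneg (φ^2 - 1)]
  have hK3 : (3:ℝ) ≤ (k:ℝ) := by exact_mod_cast hk
  have hbern : 1 + (k:ℝ)*(φ-1) ≤ φ^k := by
    have h1 := one_add_mul_le_pow (by linarith : (-2:ℝ) ≤ φ - 1) k
    have h2 : (1 + (φ-1))^k = φ^k := by norm_num
    linarith [h2 ▸ h1]
  have hD : (0:ℝ) < 2 + ((k:ℝ) + 1) * (φ - 2) := by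
    have h1 : (1 + (k:ℝ)*(φ-1)) * (2 - φ) ≤ 1 := by
      calc (1 + (k:ℝ)*(φ-1)) * (2 - φ) ≤ φ^k * (2 - φ) :=
        mul_le_mul_of_nonneg_right hbern (by linarith)
      _ = 1 := hφgeom
    nlinarith [h1, hK3, hφ53, hφ2, mul_nonneg (by linarith : (0:ℝ) ≤ (k:ℝ)) (by linarith : (0:ℝ) ≤ 2 - φ)]
  have hf2 : 1/2 < f := by
    rw [hf, lt_div_iff₀ hD]
    nlinarith [mul_pos (by linarith : (0:ℝ) < (k:ℝ) - 1) (by linarith : (0:ℝ) < 2 - φ)]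
  have hf0 : (0:ℝ) < f := by linarith
  -- powers of φ
  have hX0 : (0:ℝ) < φ ^ (n-1) := pow_pos hφ0 _
  have hY0 : (0:ℝ) < φ ^ (m-1) := pow_pos hφ0 _
  have hY1 : (1:ℝ) ≤ φ ^ (m-1) := by simpa using pow_le_pow_right₀ (le_of_lt hφ1) (Nat.zero_le (m-1))
  have hYX : φ ^ (m-1) ≤ φ ^ (n-1) := pow_le_pow_right₀ (le_of_lt hφ1) (by omega)
  have hX259 : (25:ℝ)/9 < φ ^ (n-1) := by
    have h2 : φ^2 ≤ φ^(n-1) := pow_le_pow_right₀ (le_of_lt hφ1) (by omega)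
    nlinarith [hφ53]
  -- error terms
  set en : ℝ := (F n : ℝ) - f * φ ^ (n - 1) with hen
  set em : ℝ := (F m : ℝ) - f * φ ^ (m - 1) with hem
  obtain ⟨hen1, hen2⟩ := abs_lt.1 happroxn
  obtain ⟨hem1, hem2⟩ := abs_lt.1 happroxm
  -- δ^l facts
  have hδ0 : (0:ℝ) < 3 - 2*s := by linarith
  have hδl0 : (0:ℝ) < (3-2*s)^l := pow_pos hδ0 l
  have hδl1 : (3-2*s)^l ≤ 1 := pow_le_one₀ hδ0.le (by linarith)
  -- Binet with h
  have hγl : (3+2*s)^l = ((f * φ^(n-1) + en) * (f * φ^(m-1) + em)) * (4*s) + (3-2*s)^l := by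
    have hb := hbal l
    rw [h] at hb
    push_cast at hb
    have hFn : (F n : ℝ) = f * φ^(n-1) + en := by rw [hen]; ring
    have hFm : (F m : ℝ) = f * φ^(m-1) + em := by rw [hem]; ring
    rw [hFn, hFm] at hb
    linarith
  -- zpow rewrite
  have hzp : φ ^ (-((n : ℤ) + (m:ℤ) - 2)) = (φ^(n-1) * φ^(m-1))⁻¹ := by
    have hcast : (((n - 1) + (m - 1) : ℕ) : ℤ) = (n:ℤ) + (m:ℤ) - 2 := by omega
    rw [← hcast, zpow_neg, zpow_natCast, pow_add]
  rw [hzp]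
  have hP : (0:ℝ) < f^2 * (φ^(n-1) * φ^(m-1)) := by positivity
  have key : (3+2*s) ^ l * (φ^(n-1) * φ^(m-1))⁻¹ * (f ^ 2)⁻¹ / (4 * s) - 1
      = (en*f*φ^(m-1) + em*f*φ^(n-1) + en*em + (3-2*s)^l/(4*s)) / (f^2 * (φ^(n-1) * φ^(m-1))) := by
    rw [hγl]
    field_simp
    ring
  rw [key, abs_div, abs_of_pos hP, div_lt_div_iff₀ hP hY0]
  have hds : (3-2*s)^l/(4*s) < 1/4 := by
    rw [div_lt_iff₀ (by positivity)]
    nlinarith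
  have hfX : 25/18 < f * φ^(n-1) := by
    nlinarith [mul_nonneg (by linarith : (0:ℝ) ≤ f - 1/2) hX0.le]
  have hNb : |en*f*φ^(m-1) + em*f*φ^(n-1) + en*em + (3-2*s)^l/(4*s)| < 6*f^2*φ^(n-1) := by
    rw [abs_lt]
    constructor
    · nlinarith [div_pos hδl0 (by positivity : (0:ℝ) < 4*s), hfX,
        mul_pos (by linarith : (0:ℝ) < 1/2 + en) (mul_pos hf0 hY0),
        mul_pos (by linarith : (0:ℝ) < 1/2 + em) (mul_pos hf0 hX0),
        mul_nonneg (by linarith : (0:ℝ) ≤ 1/2 + en) (by linarith : (0:ℝ) ≤ 1/2 + em),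
        mul_nonneg (by linarith : (0:ℝ) ≤ 1/2 - en) (by linarith : (0:ℝ) ≤ 1/2 - em),
        mul_le_mul_of_nonneg_left hYX hf0.le,
        mul_pos (by linarith : (0:ℝ) < 2*f - 1) (mul_pos hf0 hX0)]
    · nlinarith [hds, hfX,
        mul_pos (by linarith : (0:ℝ) < 1/2 - en) (mul_pos hf0 hY0),
        mul_pos (by linarith : (0:ℝ) < 1/2 - em) (mul_pos hf0 hX0),
        mul_nonneg (by linarith : (0:ℝ) ≤ 1/2 + en) (by linarith : (0:ℝ) ≤ 1/2 + em),
        mul_nonneg (by linarith : (0:ℝ) ≤ 1/2 - en) (by linarith : (0:ℝ) ≤ 1/2 - em),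
        mul_le_mul_of_nonneg_left hYX hf0.le,
        mul_pos (by linarith : (0:ℝ) < 2*f - 1) (mul_pos hf0 hX0)]
  calc |en*f*φ^(m-1) + em*f*φ^(n-1) + en*em + (3-2*s)^l/(4*s)| * φ^(m-1)
      < (6*f^2*φ^(n-1)) * φ^(m-1) := mul_lt_mul_of_pos_right hNb hY0
    _ = 6 * (f^2 * (φ^(n-1) * φ^(m-1))) := by ring
end
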